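/- The map ζ ↦ w·χ_ζ from the open right half-plane to L¹(ℝⁿ, ℂ) is holomorphic, where w(x) = (1+‖x‖)^k with k ≥ 0; moreover its derivative at ζ is w·χ'_ζ, where χ'_ζ(x) = d/dζ χ_ζ(x), and ‖((χ_{ζ+h} − χ_ζ)/h − χ'_ζ)·w‖_{L¹} → 0 as h → 0. -/

import Mathlib

/-!
For `Re z > 0` the `z`-derivative of the heat kernel is `(t²/(4z²) - n/(2z))` times the kernel, and
on a closed ball `‖z - ζ‖ ≤ Re ζ / 2` it is bounded by `(A + B t²) e^{-c t²}` with constants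
uniform in `z`. After multiplying by `(1 + t)^k ≤ e^{k²/c} e^{c t²/4}` this stays integrable, so by
the mean value theorem the weighted difference quotients are dominated by an integrable function,
and dominated convergence gives the `L¹` convergence.
-/

open MeasureTheory Real Filter Metric
open scoped ENNReal Topology

section DominatedSlope

variable {α E : Type*} [MeasurableSpace α] {μ : Measure α} [NormedAddCommGroup E]

theorem tendsto_eLpNorm_one_of_dominated {ι : Type*} {l : Filter ι} [l.IsCountablyGenerated]
    {G : ι → α → E} (bound : α → ℝ) (hG_meas : ∀ᶠ i in l, AEStronglyMeasurable (G i) μ)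
    (h_bound : ∀ᶠ i in l, ∀ᵐ a ∂μ, ‖G i a‖ ≤ bound a) (bound_integrable : Integrable bound μ)
    (h_lim : ∀ᵐ a ∂μ, Tendsto (fun i => G i a) l (𝓝 0)) :
    Tendsto (fun i => eLpNorm (G i) 1 μ) l (𝓝 0) := by
  simp_rw [eLpNorm_one_eq_lintegral_enorm]
  have h_dom := tendsto_lintegral_filter_of_dominated_convergence' (μ := μ)
    (F := fun i a => ‖G i a‖ₑ) (f := fun _ => 0) (fun a => ENNReal.ofReal (bound a))
    (by filter_upwards [hG_meas] with i hi using hi.enorm)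
    (by
      filter_upwards [h_bound] with i hi
      filter_upwards [hi] with a ha
      exact ofReal_norm (G i a) ▸ ENNReal.ofReal_le_ofReal ha)
    bound_integrable.lintegral_lt_top.ne
    (by filter_upwards [h_lim] with a ha using by simpa using ha.enorm)
  simpa using h_dom

variable {𝕜 : Type*} [RCLike 𝕜] [NormedSpace 𝕜 E]

theorem tendsto_eLpNorm_one_slope_sub_deriv {F F' : 𝕜 → α → E} {ζ : 𝕜} {r : ℝ} (hr : 0 < r)
    {bound : α → ℝ} (hF_meas : ∀ z, AEStronglyMeasurable (F z) μ)
    (h_diff : ∀ᵐ a ∂μ, ∀ z ∈ closedBall ζ r, HasDerivAt (F · a) (F' z a) z)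
    (h_bound : ∀ᵐ a ∂μ, ∀ z ∈ closedBall ζ r, ‖F' z a‖ ≤ bound a)
    (bound_integrable : Integrable bound μ) :
    Tendsto (fun h : 𝕜 => eLpNorm (fun a => h⁻¹ • (F (ζ + h) a - F ζ a) - F' ζ a) 1 μ)
      (𝓝[≠] 0) (𝓝 0) := by
  have hζ : ζ ∈ closedBall ζ r := mem_closedBall_self hr.le
  have h_slope : ∀ᵐ a ∂μ,
      Tendsto (fun h : 𝕜 => h⁻¹ • (F (ζ + h) a - F ζ a)) (𝓝[≠] 0) (𝓝 (F' ζ a)) := by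
    filter_upwards [h_diff] with a ha using (ha ζ hζ).tendsto_slope_zero
  have h_slope_meas : ∀ h : 𝕜, AEStronglyMeasurable (fun a => h⁻¹ • (F (ζ + h) a - F ζ a)) μ :=
    fun h => ((hF_meas _).sub (hF_meas ζ)).const_smul _
  have hF'_meas : AEStronglyMeasurable (F' ζ) μ :=
    aestronglyMeasurable_of_tendsto_ae _ h_slope_meas h_slope
  have h_small : ∀ᶠ h in 𝓝[≠] (0 : 𝕜), ‖h‖ ≤ r ∧ h ≠ 0 := by
    filter_upwards [nhdsWithin_le_nhds (closedBall_mem_nhds (0 : 𝕜) hr), self_mem_nhdsWithin]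
      with h hr' h0 using ⟨mem_closedBall_zero_iff.1 hr', h0⟩
  refine tendsto_eLpNorm_one_of_dominated (fun a => bound a + bound a)
    (.of_forall fun h => (h_slope_meas h).sub hF'_meas) ?_
    (bound_integrable.add bound_integrable) ?_
  · filter_upwards [h_small] with h ⟨hh, h0⟩
    filter_upwards [h_diff, h_bound] with a hda hba
    have hζh : ζ + h ∈ closedBall ζ r := by
      rwa [mem_closedBall, dist_self_add_left]
    have h_mvt : ‖F (ζ + h) a - F ζ a‖ ≤ bound a * ‖h‖ := by
      have := (convex_closedBall ζ r).norm_image_sub_le_of_norm_hasDerivWithin_le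
        (fun z hz => (hda z hz).hasDerivWithinAt) hba hζ hζh
      rwa [add_sub_cancel_left] at this
    have h_quot : ‖h⁻¹ • (F (ζ + h) a - F ζ a)‖ ≤ bound a := by
      rw [norm_smul, norm_inv, inv_mul_le_iff₀ (norm_pos_iff.2 h0), mul_comm]
      exact h_mvt
    exact (norm_sub_le _ _).trans (add_le_add h_quot (hba ζ hζ))
  · filter_upwards [h_slope] with a ha using tendsto_sub_nhds_zero_iff.2 ha

end DominatedSlope

noncomputable def heatKernel (n : ℕ) (z : ℂ) (t : ℝ) : ℂ :=
  (4 * (π : ℂ) * z) ^ (-(n : ℂ) / 2) * Complex.exp (-(t : ℂ) ^ 2 / (4 * z))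

noncomputable def heatKernelDeriv (n : ℕ) (z : ℂ) (t : ℝ) : ℂ :=
  ((t : ℂ) ^ 2 / (4 * z ^ 2) - n / (2 * z)) * heatKernel n z t

theorem hasDerivAt_heatKernel (n : ℕ) (t : ℝ) {z : ℂ} (hz : 0 < z.re) :
    HasDerivAt (heatKernel n · t) (heatKernelDeriv n z t) z := by
  have hz0 : z ≠ 0 := fun h => by simp [h] at hz
  have hπz : 4 * (π : ℂ) * z ≠ 0 := by simp [hz0, Real.pi_ne_zero]
  have h_pow : HasDerivAt (fun z : ℂ => (4 * (π : ℂ) * z) ^ (-(n : ℂ) / 2))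
      (-(n : ℂ) / 2 * (4 * (π : ℂ) * z) ^ (-(n : ℂ) / 2 - 1) * (4 * π)) z := by
    refine ((hasDerivAt_id z).const_mul (4 * (π : ℂ))).cpow_const (Or.inl ?_) |>.congr_deriv
      (by simp)
    simpa [Complex.mul_re] using mul_pos (mul_pos four_pos pi_pos) hz
  have h_exp : HasDerivAt (fun z : ℂ => Complex.exp (-(t : ℂ) ^ 2 / (4 * z)))
      (Complex.exp (-(t : ℂ) ^ 2 / (4 * z)) * ((t : ℂ) ^ 2 / (4 * z ^ 2))) z := by
    refine HasDerivAt.cexp ?_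
    rw [show (fun z : ℂ => -(t : ℂ) ^ 2 / (4 * z)) = fun z => -(t : ℂ) ^ 2 / 4 * z⁻¹ by
      ext z; ring]
    exact ((hasDerivAt_inv hz0).const_mul _).congr_deriv (by ring)
  refine (h_pow.mul h_exp).congr_deriv ?_
  rw [Complex.cpow_sub _ _ hπz, Complex.cpow_one, heatKernelDeriv, heatKernel]
  field_simp
  ring

theorem norm_cpow_ofReal_le_of_le_re {z : ℂ} {r y : ℝ} (hr : 0 < r) (hrz : r ≤ z.re)
    (hy : y ≤ 0) : ‖z ^ (y : ℂ)‖ ≤ r ^ y := by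
  rw [Complex.norm_cpow_real]
  exact rpow_le_rpow_of_nonpos hr (hrz.trans (Complex.re_le_norm z)) hy

theorem norm_cexp_neg_sq_div_le {z : ℂ} {r K : ℝ} (hr : 0 < r) (hrz : r ≤ z.re) (hzK : ‖z‖ ≤ K)
    (t : ℝ) : ‖Complex.exp (-(t : ℂ) ^ 2 / (4 * z))‖ ≤ Real.exp (-(r / (4 * K ^ 2)) * t ^ 2) := by
  have hz : 0 < Complex.normSq z := Complex.normSq_pos.2 fun h => by simp [h] at hrz; linarith
  have h_re : (-(t : ℂ) ^ 2 / (4 * z)).re = -(t ^ 2 / 4) * (z.re / Complex.normSq z) := by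
    rw [← Complex.inv_re, show -(t : ℂ) ^ 2 / (4 * z) = ((-(t ^ 2 / 4) : ℝ) : ℂ) * z⁻¹ by
      push_cast; field_simp, Complex.re_ofReal_mul]
  have h_normSq : Complex.normSq z ≤ K ^ 2 := by
    rw [Complex.normSq_eq_norm_sq]
    gcongr
  have h_ratio : r / K ^ 2 ≤ z.re / Complex.normSq z :=
    div_le_div₀ (hr.le.trans hrz) hrz hz h_normSq
  rw [Complex.norm_exp, h_re, Real.exp_le_exp,
    show -(r / (4 * K ^ 2)) * t ^ 2 = -(t ^ 2 / 4) * (r / K ^ 2) by ring]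
  exact mul_le_mul_of_nonpos_left h_ratio (by nlinarith [sq_nonneg t])

theorem norm_heatKernel_le (n : ℕ) {z : ℂ} {r K : ℝ} (hr : 0 < r) (hrz : r ≤ z.re)
    (hzK : ‖z‖ ≤ K) (t : ℝ) :
    ‖heatKernel n z t‖ ≤ (4 * π * r) ^ (-(n : ℝ) / 2) * Real.exp (-(r / (4 * K ^ 2)) * t ^ 2) := by
  have h_re : 4 * π * r ≤ (4 * (π : ℂ) * z).re := by
    simpa [Complex.mul_re] using mul_le_mul_of_nonneg_left hrz (by positivity : (0:ℝ) ≤ 4 * π)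
  rw [heatKernel, norm_mul]
  gcongr
  · simpa using norm_cpow_ofReal_le_of_le_re (by positivity) h_re
      (by linarith [(n.cast_nonneg : (0:ℝ) ≤ n)] : -(n : ℝ) / 2 ≤ 0)
  · exact norm_cexp_neg_sq_div_le hr hrz hzK t

theorem norm_heatKernelDeriv_le (n : ℕ) {z : ℂ} {r K : ℝ} (hr : 0 < r) (hrz : r ≤ z.re)
    (hzK : ‖z‖ ≤ K) (t : ℝ) :
    ‖heatKernelDeriv n z t‖ ≤ (4 * π * r) ^ (-(n : ℝ) / 2) *
      ((n / (2 * r) + 1 / (4 * r ^ 2) * t ^ 2) * Real.exp (-(r / (4 * K ^ 2)) * t ^ 2)) := by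
  have hrz' : r ≤ ‖z‖ := hrz.trans (Complex.re_le_norm z)
  have h_factor :
      ‖(t : ℂ) ^ 2 / (4 * z ^ 2) - n / (2 * z)‖ ≤ n / (2 * r) + 1 / (4 * r ^ 2) * t ^ 2 := by
    refine (norm_sub_le _ _).trans ?_
    rw [add_comm, one_div_mul_eq_div]
    simp only [norm_div, norm_mul, norm_pow, Complex.norm_real, Real.norm_eq_abs, sq_abs,
      Complex.norm_natCast, Complex.norm_ofNat]
    gcongr
  rw [heatKernelDeriv, norm_mul]
  calc _ ≤ (n / (2 * r) + 1 / (4 * r ^ 2) * t ^ 2) *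
        ((4 * π * r) ^ (-(n : ℝ) / 2) * Real.exp (-(r / (4 * K ^ 2)) * t ^ 2)) :=
      mul_le_mul h_factor (norm_heatKernel_le n hr hrz hzK t) (norm_nonneg _) (by positivity)
    _ = _ := by ring

theorem one_add_rpow_le_exp_mul_exp_sq {k c t : ℝ} (hk : 0 ≤ k) (hc : 0 < c) (ht : 0 ≤ t) :
    (1 + t) ^ k ≤ Real.exp (k ^ 2 / c) * Real.exp (c / 4 * t ^ 2) := by
  calc (1 + t) ^ k ≤ Real.exp t ^ k := by gcongr; linarith [Real.add_one_le_exp t]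
    _ = Real.exp (k * t) := by rw [← Real.exp_mul, mul_comm]
    _ ≤ Real.exp (k ^ 2 / c) * Real.exp (c / 4 * t ^ 2) := by
      rw [← Real.exp_add, Real.exp_le_exp]
      -- `k t ≤ k²/c + c t²/4` is AM-GM
      have : k ^ 2 / c + c / 4 * t ^ 2 - k * t = (2 * k - c * t) ^ 2 / (4 * c) := by
        field_simp; ring
      nlinarith [div_nonneg (sq_nonneg (2 * k - c * t)) (by positivity : (0:ℝ) ≤ 4 * c)]

theorem add_mul_sq_le_mul_exp_sq {A B c : ℝ} (hA : 0 ≤ A) (hB : 0 ≤ B) (hc : 0 < c) (t : ℝ) :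
    A + B * t ^ 2 ≤ (A + 4 * B / c) * Real.exp (c / 4 * t ^ 2) := by
  have h_one : 1 ≤ Real.exp (c / 4 * t ^ 2) := Real.one_le_exp (by positivity)
  have h_lin : c / 4 * t ^ 2 ≤ Real.exp (c / 4 * t ^ 2) := by
    linarith [Real.add_one_le_exp (c / 4 * t ^ 2)]
  calc A + B * t ^ 2 = A * 1 + 4 * B / c * (c / 4 * t ^ 2) := by field_simp
    _ ≤ A * Real.exp (c / 4 * t ^ 2) + 4 * B / c * Real.exp (c / 4 * t ^ 2) := by gcongr
    _ = _ := by ring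

theorem re_sub_le_re_of_mem_closedBall {z ζ : ℂ} {r : ℝ} (hz : z ∈ closedBall ζ r) :
    ζ.re - r ≤ z.re := by
  have h := (Complex.abs_re_le_norm (z - ζ)).trans (mem_closedBall_iff_norm.1 hz)
  rw [Complex.sub_re] at h
  linarith [neg_abs_le (z.re - ζ.re)]

section Gaussian

variable {V : Type*} [NormedAddCommGroup V] [InnerProductSpace ℝ V] [FiniteDimensional ℝ V]
  [MeasurableSpace V] [BorelSpace V]

theorem integrable_exp_neg_mul_sq_norm {b : ℝ} (hb : 0 < b) :
    Integrable (fun x : V => Real.exp (-b * ‖x‖ ^ 2)) := by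
  have h := (GaussianFourier.integrable_cexp_neg_mul_sq_norm_add (V := V) (b := b)
    (by simpa using hb) 0 0).norm
  refine h.congr (.of_forall fun x => ?_)
  simp only [inner_zero_left, Complex.ofReal_zero, mul_zero, add_zero]
  rw [← Complex.norm_exp_ofReal]
  push_cast
  ring_nf

theorem integrable_one_add_norm_rpow_mul_gaussian {k A B c : ℝ} (hk : 0 ≤ k) (hA : 0 ≤ A)
    (hB : 0 ≤ B) (hc : 0 < c) :
    Integrable (fun x : V => (1 + ‖x‖) ^ k * ((A + B * ‖x‖ ^ 2) * Real.exp (-c * ‖x‖ ^ 2))) := by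
  refine ((integrable_exp_neg_mul_sq_norm (V := V) (half_pos hc)).const_mul
    (Real.exp (k ^ 2 / c) * (A + 4 * B / c))).mono' (by fun_prop) (.of_forall fun x => ?_)
  have h_exp : Real.exp (c / 4 * ‖x‖ ^ 2) * Real.exp (c / 4 * ‖x‖ ^ 2) * Real.exp (-c * ‖x‖ ^ 2)
      = Real.exp (-(c / 2) * ‖x‖ ^ 2) := by
    rw [← Real.exp_add, ← Real.exp_add]; ring_nf
  rw [Real.norm_of_nonneg (by positivity)]
  calc
    _ ≤ (Real.exp (k ^ 2 / c) * Real.exp (c / 4 * ‖x‖ ^ 2)) *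
        (((A + 4 * B / c) * Real.exp (c / 4 * ‖x‖ ^ 2)) * Real.exp (-c * ‖x‖ ^ 2)) := by
      gcongr
      · exact one_add_rpow_le_exp_mul_exp_sq hk hc (norm_nonneg x)
      · exact add_mul_sq_le_mul_exp_sq hA hB hc _
    _ = _ := by rw [← h_exp]; ring

theorem tendsto_eLpNorm_one_weighted_heatKernel_slope (n : ℕ) {k : ℝ} (hk : 0 ≤ k) {ζ : ℂ}
    (hζ : 0 < ζ.re) :
    Tendsto (fun h : ℂ => eLpNorm (fun x : V =>
        h⁻¹ • ((((1 + ‖x‖) ^ k : ℝ) : ℂ) * heatKernel n (ζ + h) ‖x‖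
          - (((1 + ‖x‖) ^ k : ℝ) : ℂ) * heatKernel n ζ ‖x‖)
        - (((1 + ‖x‖) ^ k : ℝ) : ℂ) * heatKernelDeriv n ζ ‖x‖) 1 volume)
      (𝓝[≠] 0) (𝓝 0) := by
  set r := ζ.re / 2 with hr_def
  have hr : 0 < r := half_pos hζ
  have h_ball : ∀ z ∈ closedBall ζ r, r ≤ z.re ∧ ‖z‖ ≤ ‖ζ‖ + r := fun z hz =>
    ⟨by linarith [re_sub_le_re_of_mem_closedBall hz, hr_def], norm_le_of_mem_closedBall hz⟩
  have h_meas : ∀ z, AEStronglyMeasurable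
      (fun x : V => (((1 + ‖x‖) ^ k : ℝ) : ℂ) * heatKernel n z ‖x‖) := by
    intro z
    unfold heatKernel
    fun_prop
  have h_deriv : ∀ x : V, ∀ z ∈ closedBall ζ r,
      HasDerivAt (fun z => (((1 + ‖x‖) ^ k : ℝ) : ℂ) * heatKernel n z ‖x‖)
        ((((1 + ‖x‖) ^ k : ℝ) : ℂ) * heatKernelDeriv n z ‖x‖) z := fun x z hz =>
    (hasDerivAt_heatKernel n ‖x‖ (hr.trans_le (h_ball z hz).1)).const_mul _
  have h_bound : ∀ x : V, ∀ z ∈ closedBall ζ r,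
      ‖(((1 + ‖x‖) ^ k : ℝ) : ℂ) * heatKernelDeriv n z ‖x‖‖ ≤ (4 * π * r) ^ (-(n : ℝ) / 2) *
        ((1 + ‖x‖) ^ k * ((n / (2 * r) + 1 / (4 * r ^ 2) * ‖x‖ ^ 2) *
          Real.exp (-(r / (4 * (‖ζ‖ + r) ^ 2)) * ‖x‖ ^ 2))) := by
    intro x z hz
    rw [norm_mul, Complex.norm_real, norm_of_nonneg (by positivity), mul_left_comm]
    gcongr
    exact norm_heatKernelDeriv_le n hr (h_ball z hz).1 (h_ball z hz).2 ‖x‖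
  have h_int := (integrable_one_add_norm_rpow_mul_gaussian (V := V) hk (A := n / (2 * r))
    (B := 1 / (4 * r ^ 2)) (c := r / (4 * (‖ζ‖ + r) ^ 2)) (by positivity) (by positivity)
    (by positivity)).const_mul ((4 * π * r) ^ (-(n : ℝ) / 2))
  -- elaborated apart from the goal: unifying `F` with the goal first is very slow
  have h_lim := tendsto_eLpNorm_one_slope_sub_deriv hr h_meas (.of_forall h_deriv)
    (.of_forall h_bound) h_int
  exact h_lim

end Gaussian

/-- The map `ζ ↦ w·χ_ζ` is holomorphic from the open right half-plane into
`L¹(ℝⁿ, ℂ)`: at every `ζ` with `Re ζ > 0`, the difference quotients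
`(χ_{ζ+h} − χ_ζ)/h` converge in the weighted `L¹` norm to the pointwise
`ζ`-derivative `χ'_ζ`, i.e. the `L¹`-derivative of `ζ ↦ w·χ_ζ` is `w·χ'_ζ`. -/
theorem weighted_gaussian_holomorphic_L1 (n : ℕ) (k : ℝ) (hk : 0 ≤ k)
    (w : EuclideanSpace ℝ (Fin n) → ℝ) (hw : ∀ x, w x = (1 + ‖x‖) ^ k)
    (χ : ℂ → EuclideanSpace ℝ (Fin n) → ℂ)
    (hχ : ∀ ζ x, χ ζ x =
      (4 * (π : ℂ) * ζ) ^ (-(n : ℂ) / 2) * Complex.exp (-(‖x‖ : ℂ) ^ 2 / (4 * ζ)))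
    (χ' : ℂ → EuclideanSpace ℝ (Fin n) → ℂ)
    (hχ' : ∀ ζ x, χ' ζ x = deriv (fun z => χ z x) ζ)
    (ζ : ℂ) (hζ : 0 < ζ.re) :
    Tendsto (fun h : ℂ =>
        eLpNorm (fun x => (w x : ℂ) * ((χ (ζ + h) x - χ ζ x) / h - χ' ζ x)) 1 volume)
      (nhdsWithin 0 {0}ᶜ) (nhds 0) := by
  obtain rfl : w = fun x => (1 + ‖x‖) ^ k := funext hw
  obtain rfl : χ = fun z x => heatKernel n z ‖x‖ := funext fun z => funext (hχ z)
  refine (tendsto_eLpNorm_one_weighted_heatKernel_slope n hk hζ).congr fun h =>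
    congrArg (eLpNorm · 1 volume) (funext fun x => ?_)
  rw [hχ', (hasDerivAt_heatKernel n ‖x‖ hζ).deriv, smul_eq_mul]
  ring
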